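/- arXiv:0911.1870 — 3 statements merged into one kernel-verified Lean document; each statement's English description precedes it below -/
import Mathlib

section
/- Let O be a bounded open subset of R^M and g : R → (-∞, ∞] a lower semicontinuous convex function. Suppose (v_n) is a sequence in L¹(O) with v_n ⇀ v weakly in L¹(O), g(v_n) ∈ L¹(O) for each n, and g(v_n) ⇀ G weakly in L¹(O). Then g(v) ≤ G almost everywhere on O, g(v) ∈ L¹(O), and ∫_O g(v) dy ≤ liminf_{n→∞} ∫_O g(v_n) dy. -/
/-!
The epigraph of `g`, read in `ℝ × ℝ`, is closed and convex, hence a countable intersection of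
closed half-planes `a x + b t ≤ c`. Each inequality `a v_n + b g(v_n) ≤ c` passes to the weak
limit (test against indicators of measurable sets), so `(v, G)` lies in the epigraph a.e., which
is `g(v) ≤ G`. A non-vertical supporting line bounds `g` below by an affine function, so `g(v)` is
squeezed between integrable functions, and testing with `φ = 1` gives `∫ g(v_n) → ∫ G ≥ ∫ g(v)`.
-/

open MeasureTheory Set Filter Topology

/-- Weak convergence in `L¹(O)`: convergence of integrals against all bounded
measurable test functions. -/
def WeakL1Tendsto {E : Type*} [MeasurableSpace E] (μ : Measure E)
    (v : ℕ → E → ℝ) (w : E → ℝ) : Prop :=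
  ∀ φ : E → ℝ, Measurable φ → (∃ C : ℝ, ∀ x, |φ x| ≤ C) →
    Tendsto (fun n => ∫ x, v n x * φ x ∂μ) atTop (nhds (∫ x, w x * φ x ∂μ))

lemma isClosed_realEpigraph {α : Type*} [TopologicalSpace α] {f : α → EReal}
    (hf : LowerSemicontinuous f) : IsClosed {p : α × ℝ | f p.1 ≤ p.2} :=
  hf.isClosed_epigraph.preimage
    (continuous_fst.prodMk (continuous_coe_real_ereal.comp continuous_snd))

lemma convex_realEpigraph {g : ℝ → EReal}
    (hg_conv : ∀ x y : ℝ, ∀ t : ℝ, 0 ≤ t → t ≤ 1 →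
      g (t * x + (1 - t) * y) ≤ (t : EReal) * g x + ((1 - t : ℝ) : EReal) * g y) :
    Convex ℝ {p : ℝ × ℝ | g p.1 ≤ p.2} := by
  rintro ⟨x, s⟩ (hxs : g x ≤ s) ⟨y, t⟩ (hyt : g y ≤ t) a b ha hb hab
  obtain rfl : b = 1 - a := by linarith
  calc g (a * x + (1 - a) * y)
      ≤ (a : EReal) * g x + ((1 - a : ℝ) : EReal) * g y := hg_conv x y a ha (by linarith)
    _ ≤ (a : EReal) * s + ((1 - a : ℝ) : EReal) * t := by gcongr
    _ = ((a • (x, s) + (1 - a) • (y, t)).2 : ℝ) := by simp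

lemma ContinuousLinearMap.apply_real_prod (f : ℝ × ℝ →L[ℝ] ℝ) (p : ℝ × ℝ) :
    f p = f (1, 0) * p.1 + f (0, 1) * p.2 := by
  calc f p = f (p.1 • (1, 0) + p.2 • (0, 1)) := by congr 1; ext <;> simp
    _ = _ := by rw [map_add, map_smul, map_smul, smul_eq_mul, smul_eq_mul, mul_comm, mul_comm p.2]

/-- A line separating `(x₀, t₀)` from `K` also separates it from `(x₀, t₁)`, so it is not
vertical. -/
lemma Convex.exists_affine_lt_snd {K : Set (ℝ × ℝ)} (hKc : Convex ℝ K) (hKcl : IsClosed K)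
    {x₀ t₀ t₁ : ℝ} (ht : t₀ < t₁) (h₀ : (x₀, t₀) ∉ K) (h₁ : (x₀, t₁) ∈ K) :
    ∃ a b : ℝ, ∀ p ∈ K, a * p.1 + b < p.2 := by
  obtain ⟨f, u, hfu, hK⟩ := geometric_hahn_banach_point_closed hKc hKcl h₀
  have hpos : 0 < f (0, 1) := by
    have := hK _ h₁
    rw [f.apply_real_prod] at this hfu
    nlinarith
  refine ⟨-f (1, 0) / f (0, 1), u / f (0, 1), fun p hp => ?_⟩
  have := hK p hp
  rw [f.apply_real_prod] at this
  rw [neg_div, neg_mul, div_mul_eq_mul_div, ← sub_eq_neg_add, ← sub_div, div_lt_iff₀ hpos]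
  linarith

namespace WeakL1Tendsto

variable {α : Type*} [MeasurableSpace α] {μ : Measure α} {u : ℕ → α → ℝ} {w : α → ℝ}

lemma setIntegral (h : WeakL1Tendsto μ u w) {s : Set α} (hs : MeasurableSet s) :
    Tendsto (fun n => ∫ x in s, u n x ∂μ) atTop (𝓝 (∫ x in s, w x ∂μ)) := by
  have hbdd : ∀ x, |s.indicator (1 : α → ℝ) x| ≤ 1 := fun x => by
    by_cases hx : x ∈ s <;> simp [hx]
  have key : ∀ f : α → ℝ, ∫ x, f x * s.indicator 1 x ∂μ = ∫ x in s, f x ∂μ := fun f => by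
    rw [← integral_indicator hs]
    congr 1 with x
    by_cases hx : x ∈ s <;> simp [hx]
  simpa only [key] using h (s.indicator 1) (measurable_one.indicator hs) ⟨1, hbdd⟩

lemma integral (h : WeakL1Tendsto μ u w) :
    Tendsto (fun n => ∫ x, u n x ∂μ) atTop (𝓝 (∫ x, w x ∂μ)) := by
  simpa using h.setIntegral MeasurableSet.univ

variable [IsFiniteMeasure μ] {u' : ℕ → α → ℝ} {w' : α → ℝ}

lemma ae_le_of_ae_le (hu : WeakL1Tendsto μ u w) (hu' : WeakL1Tendsto μ u' w')
    (hu_int : ∀ n, Integrable (u n) μ) (hw_int : Integrable w μ)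
    (hu'_int : ∀ n, Integrable (u' n) μ) (hw'_int : Integrable w' μ) {a b c : ℝ}
    (hle : ∀ n, ∀ᵐ x ∂μ, a * u n x + b * u' n x ≤ c) :
    ∀ᵐ x ∂μ, a * w x + b * w' x ≤ c := by
  have hcomb : ∀ {f f' : α → ℝ}, Integrable f μ → Integrable f' μ →
      Integrable (fun x => a * f x + b * f' x) μ := fun hf hf' =>
    (hf.const_mul a).add (hf'.const_mul b)
  have hsplit : ∀ {f f' : α → ℝ}, Integrable f μ → Integrable f' μ → ∀ s : Set α,
      ∫ x in s, a * f x + b * f' x ∂μ = a * ∫ x in s, f x ∂μ + b * ∫ x in s, f' x ∂μ :=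
    fun hf hf' s => by
      rw [integral_add (hf.const_mul a).restrict (hf'.const_mul b).restrict,
        integral_const_mul, integral_const_mul]
  refine ae_le_of_forall_setIntegral_le (hcomb hw_int hw'_int) (integrable_const c)
    fun s hs _ => ?_
  have hlim : Tendsto (fun n => ∫ x in s, a * u n x + b * u' n x ∂μ) atTop
      (𝓝 (∫ x in s, a * w x + b * w' x ∂μ)) := by
    simp only [hsplit (hu_int _) (hu'_int _), hsplit hw_int hw'_int]
    exact ((hu.setIntegral hs).const_mul a).add ((hu'.setIntegral hs).const_mul b)
  exact le_of_tendsto' hlim fun n =>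
    integral_mono_ae (hcomb (hu_int n) (hu'_int n)).restrict (integrable_const c).restrict
      (ae_restrict_of_ae (hle n))

/-- Closed convex sets of the plane are countable intersections of half-planes, to each of which
`ae_le_of_ae_le` applies. -/
lemma ae_mem_of_ae_mem (hu : WeakL1Tendsto μ u w) (hu' : WeakL1Tendsto μ u' w')
    (hu_int : ∀ n, Integrable (u n) μ) (hw_int : Integrable w μ)
    (hu'_int : ∀ n, Integrable (u' n) μ) (hw'_int : Integrable w' μ)
    {K : Set (ℝ × ℝ)} (hKc : Convex ℝ K) (hKcl : IsClosed K)
    (hmem : ∀ n, ∀ᵐ x ∂μ, (u n x, u' n x) ∈ K) :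
    ∀ᵐ x ∂μ, (w x, w' x) ∈ K := by
  obtain ⟨l, c, hlc⟩ := RCLike.iInter_countable_halfSpaces_eq (𝕜 := ℝ) hKc hKcl
  simp only [← hlc, mem_iInter, mem_ofPred_eq, RCLike.re_to_real, ae_all_iff] at hmem ⊢
  intro i
  have hhalf := hu.ae_le_of_ae_le hu' hu_int hw_int hu'_int hw'_int (c := c i) fun n =>
    (hmem n i).mono fun x hx => (l i).apply_real_prod _ ▸ hx
  exact hhalf.mono fun x hx => ((l i).apply_real_prod _).symm ▸ hx

end WeakL1Tendsto

lemma integrable_toReal_comp_of_ae_le {α : Type*} [MeasurableSpace α] {μ : Measure α}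
    [IsFiniteMeasure μ] {g : ℝ → EReal} (hg_lsc : LowerSemicontinuous g)
    (hg_conv : ∀ x y : ℝ, ∀ t : ℝ, 0 ≤ t → t ≤ 1 →
      g (t * x + (1 - t) * y) ≤ (t : EReal) * g x + ((1 - t : ℝ) : EReal) * g y)
    (hg_ne_bot : ∀ x, g x ≠ ⊥) {u G : α → ℝ} (hu : Integrable u μ) (hG : Integrable G μ)
    (hle : ∀ᵐ x ∂μ, g (u x) ≤ G x) :
    Integrable (fun x => (g (u x)).toReal) μ := by
  rcases eq_zero_or_neZero μ with rfl | _
  · exact integrable_zero_measure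
  obtain ⟨x₀, hx₀⟩ := hle.exists
  have hfin : g (u x₀) ≠ ⊤ := (hx₀.trans_lt (EReal.coe_lt_top _)).ne
  have hbelow : (u x₀, (g (u x₀)).toReal - 1) ∉ {p : ℝ × ℝ | g p.1 ≤ p.2} := by
    simp only [mem_ofPred_eq, not_le]
    rw [← EReal.coe_toReal hfin (hg_ne_bot _), EReal.toReal_coe, EReal.coe_lt_coe_iff]
    linarith
  obtain ⟨a, b, hab⟩ := (convex_realEpigraph hg_conv).exists_affine_lt_snd
    (isClosed_realEpigraph hg_lsc) (sub_one_lt _) hbelow (EReal.le_coe_toReal hfin)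
  have hmeas : Measurable fun y => (g y).toReal :=
    measurable_ereal_toReal.comp hg_lsc.measurable
  refine integrable_of_le_of_le (g₁ := fun x => a * u x + b)
    (hmeas.comp_aemeasurable hu.aemeasurable).aestronglyMeasurable ?_ ?_
    ((hu.const_mul a).add (integrable_const b)) hG
  · filter_upwards [hle] with x hx
    exact (hab (u x, _) (EReal.le_coe_toReal ((hx.trans_lt (EReal.coe_lt_top _)).ne))).le
  · filter_upwards [hle] with x hx
    exact EReal.coe_le_coe_iff.1 ((EReal.coe_toReal_le (hg_ne_bot _)).trans hx)

theorem statement0_general {M : ℕ} (O : Set (EuclideanSpace ℝ (Fin M)))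
    (hObd : Bornology.IsBounded O)
    (g : ℝ → EReal)
    (hg_lsc : LowerSemicontinuous g)
    (hg_conv : ∀ x y : ℝ, ∀ t : ℝ, 0 ≤ t → t ≤ 1 →
      g (t * x + (1 - t) * y) ≤ (t : EReal) * g x + ((1 - t : ℝ) : EReal) * g y)
    (hg_ne_bot : ∀ x, g x ≠ ⊥)
    (v : ℕ → EuclideanSpace ℝ (Fin M) → ℝ) (vlim : EuclideanSpace ℝ (Fin M) → ℝ)
    (hv_int : ∀ n, Integrable (v n) (volume.restrict O))
    (hvlim_int : Integrable vlim (volume.restrict O))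
    (hv_weak : WeakL1Tendsto (volume.restrict O) v vlim)
    -- `g(v_n) ∈ L¹(O)` : in particular `g(v_n)` is real-valued a.e.
    (hgv_fin : ∀ n, ∀ᵐ x ∂(volume.restrict O), g (v n x) ≠ ⊤)
    (hgv_int : ∀ n, Integrable (fun x => (g (v n x)).toReal) (volume.restrict O))
    (G : EuclideanSpace ℝ (Fin M) → ℝ)
    (hG_int : Integrable G (volume.restrict O))
    (hgv_weak : WeakL1Tendsto (volume.restrict O)
      (fun n x => (g (v n x)).toReal) G) :
    (∀ᵐ x ∂(volume.restrict O), g (vlim x) ≤ (G x : EReal)) ∧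
    Integrable (fun x => (g (vlim x)).toReal) (volume.restrict O) ∧
    (∀ᵐ x ∂(volume.restrict O), g (vlim x) ≠ ⊤) ∧
    ∫ x, (g (vlim x)).toReal ∂(volume.restrict O) ≤
      Filter.liminf (fun n => ∫ x, (g (v n x)).toReal ∂(volume.restrict O)) atTop := by
  have : IsFiniteMeasure (volume.restrict O) := isFiniteMeasure_restrict.2 hObd.measure_lt_top.ne
  have hle : ∀ᵐ x ∂(volume.restrict O), g (vlim x) ≤ (G x : EReal) :=
    hv_weak.ae_mem_of_ae_mem hgv_weak hv_int hvlim_int hgv_int hG_int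
      (convex_realEpigraph hg_conv) (isClosed_realEpigraph hg_lsc) fun n => by
        filter_upwards [hgv_fin n] with x hx using EReal.le_coe_toReal hx
  have hint := integrable_toReal_comp_of_ae_le hg_lsc hg_conv hg_ne_bot hvlim_int hG_int hle
  refine ⟨hle, hint, hle.mono fun x hx => (hx.trans_lt (EReal.coe_lt_top _)).ne, ?_⟩
  rw [hgv_weak.integral.liminf_eq]
  exact integral_mono_ae hint hG_int <| hle.mono fun x hx =>
    EReal.coe_le_coe_iff.1 ((EReal.coe_toReal_le (hg_ne_bot _)).trans hx)

/-- If `g : ℝ → (-∞,∞]` is lower semicontinuous and convex,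
`v_n ⇀ v` weakly in `L¹(O)`, `g(v_n) ∈ L¹(O)` for each `n`, and `g(v_n) ⇀ G`
weakly in `L¹(O)`, then `g(v) ≤ G` a.e. on `O`, `g(v) ∈ L¹(O)`, and
`∫ g(v) ≤ liminf ∫ g(v_n)`. -/
theorem statement0 {M : ℕ} (O : Set (EuclideanSpace ℝ (Fin M)))
    (hO : IsOpen O) (hObd : Bornology.IsBounded O)
    (g : ℝ → EReal)
    (hg_lsc : LowerSemicontinuous g)
    (hg_conv : ∀ x y : ℝ, ∀ t : ℝ, 0 ≤ t → t ≤ 1 →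
      g (t * x + (1 - t) * y) ≤ (t : EReal) * g x + ((1 - t : ℝ) : EReal) * g y)
    (hg_ne_bot : ∀ x, g x ≠ ⊥)
    (v : ℕ → EuclideanSpace ℝ (Fin M) → ℝ) (vlim : EuclideanSpace ℝ (Fin M) → ℝ)
    (hv_int : ∀ n, Integrable (v n) (volume.restrict O))
    (hvlim_int : Integrable vlim (volume.restrict O))
    (hv_weak : WeakL1Tendsto (volume.restrict O) v vlim)
    -- `g(v_n) ∈ L¹(O)` : in particular `g(v_n)` is real-valued a.e.
    (hgv_fin : ∀ n, ∀ᵐ x ∂(volume.restrict O), g (v n x) ≠ ⊤)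
    (hgv_int : ∀ n, Integrable (fun x => (g (v n x)).toReal) (volume.restrict O))
    (G : EuclideanSpace ℝ (Fin M) → ℝ)
    (hG_int : Integrable G (volume.restrict O))
    (hgv_weak : WeakL1Tendsto (volume.restrict O)
      (fun n x => (g (v n x)).toReal) G) :
    (∀ᵐ x ∂(volume.restrict O), g (vlim x) ≤ (G x : EReal)) ∧
    Integrable (fun x => (g (vlim x)).toReal) (volume.restrict O) ∧
    (∀ᵐ x ∂(volume.restrict O), g (vlim x) ≠ ⊤) ∧
    ∫ x, (g (vlim x)).toReal ∂(volume.restrict O) ≤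
      Filter.liminf (fun n => ∫ x, (g (v n x)).toReal ∂(volume.restrict O)) atTop :=
  statement0_general O hObd g hg_lsc hg_conv hg_ne_bot v vlim hv_int hvlim_int hv_weak hgv_fin
    hgv_int G hG_int hgv_weak
end

section
/- Let O be a bounded open subset of R^M and g : R → R a convex function that is strictly convex on an open interval (a,b) ⊂ R. Suppose v_n ⇀ v weakly in L¹(O), g(v_n) ⇀ G weakly in L¹(O), and g(v) = G almost everywhere on O. Then, along a subsequence, v_n(y) → v(y) for almost every y in the set {y ∈ O : v(y) ∈ (a,b)}. -/
/-!
Let `s` be the right derivative of `g`, a monotone selection of subgradients. On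
`A = {v ∈ (a,b)}` the function `s ∘ v` is bounded by `max |s a| |s b|`, so it is an admissible test
function, and the gaps `g(v_n) - g(v) - s(v) (v_n - v) ≥ 0` between `g` and its supporting lines
have integrals over `A` that tend to `0` by the two weak convergences and `G = g(v)`. Hence they
tend to `0` in `L¹(A)`, so almost everywhere along a subsequence; at points where `v(y) ∈ (a,b)`,
strict convexity makes the supporting line at `v(y)` touch `g` only at `v(y)`, which turns the
vanishing of the gaps into `v_n(y) → v(y)`.
-/

open MeasureTheory Set Filter Topology

theorem StrictConvexOn.add_mul_sub_lt {S : Set ℝ} {f : ℝ → ℝ} {s t q : ℝ}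
    (hf : StrictConvexOn ℝ S f) (hsupp : ∀ y ∈ S, f t + s * (y - t) ≤ f y) (ht : t ∈ S)
    (hq : q ∈ S) (hqt : q ≠ t) : f t + s * (q - t) < f q := by
  have hmid := hf.2 ht hq hqt.symm (by norm_num : (0 : ℝ) < 1 / 2)
    (by norm_num : (0 : ℝ) < 1 / 2) (by norm_num)
  have hsupp_mid := hsupp _ (hf.1 ht hq (by norm_num : (0 : ℝ) ≤ 1 / 2)
    (by norm_num : (0 : ℝ) ≤ 1 / 2) (by norm_num))
  simp only [smul_eq_mul] at hmid hsupp_mid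
  linarith

namespace ConvexOn

variable {S : Set ℝ} {f : ℝ → ℝ} {x y : ℝ}

theorem add_rightDeriv_mul_sub_le (hf : ConvexOn ℝ S f) (hx : x ∈ interior S) (hy : y ∈ S) :
    f x + derivWithin f (Ioi x) x * (y - x) ≤ f y := by
  rcases lt_trichotomy y x with hyx | rfl | hxy
  · have h := (hf.slope_le_leftDeriv_of_mem_interior hy hx hyx).trans
      (hf.leftDeriv_le_rightDeriv_of_mem_interior hx)
    rw [slope_def_field, div_le_iff₀ (sub_pos.2 hyx)] at h
    linarith
  · simp
  · have h := hf.rightDeriv_le_slope_of_mem_interior hx hy hxy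
    rw [slope_def_field, le_div_iff₀ (sub_pos.2 hxy)] at h
    linarith

theorem monotone_rightDeriv (hf : ConvexOn ℝ univ f) :
    Monotone fun x => derivWithin f (Ioi x) x := by
  simpa [interior_univ] using hf.monotoneOn_rightDeriv

theorem tendsto_nhds_of_tendsto_apply {ι : Type*} {l : Filter ι} {H : ℝ → ℝ}
    (hH : ConvexOn ℝ univ H) {t : ℝ} (hmin : ∀ᶠ q in 𝓝[≠] t, H t < H q) {u : ι → ℝ}
    (hu : Tendsto (fun i => H (u i)) l (𝓝 (H t))) : Tendsto u l (𝓝 t) := by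
  obtain ⟨r, hr, hmin⟩ := Metric.eventually_nhds_iff.1 (eventually_nhdsWithin_iff.1 hmin)
  refine Metric.tendsto_nhds.2 fun ε hε => ?_
  set δ := min ε (r / 2)
  have hδ : 0 < δ := lt_min hε (half_pos hr)
  have hδr : δ < r := (min_le_right _ _).trans_lt (half_lt_self hr)
  have hright : H t < H (t + δ) :=
    hmin (by simpa [Real.dist_eq, abs_of_pos hδ] using hδr) (by simpa using hδ.ne')
  have hleft : H t < H (t - δ) :=
    hmin (by simpa [Real.dist_eq, abs_of_pos hδ] using hδr) (by simpa using hδ.ne')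
  -- by convexity, `H ≥ min (H (t - δ)) (H (t + δ))` outside `(t - δ, t + δ)`
  filter_upwards [hu.eventually (gt_mem_nhds (lt_min hleft hright))] with i hi
  refine lt_of_lt_of_le ?_ (min_le_left ε (r / 2) : δ ≤ ε)
  rw [Real.dist_eq, abs_lt]
  constructor
  · by_contra! h
    exact hi.not_ge <| (min_le_left _ _).trans <|
      hH.le_left_of_right_le'' (x := u i) (y := t - δ) (z := t) trivial trivial (by linarith)
        (by linarith) hleft.le
  · by_contra! h
    exact hi.not_ge <| (min_le_right _ _).trans <|
      hH.le_right_of_left_le'' (x := t) (y := t + δ) (z := u i) trivial trivial (by linarith)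
        (by linarith) hright.le

theorem tendsto_nhds_of_tendsto_sub_supportingLine {ι : Type*} {l : Filter ι} {g : ℝ → ℝ}
    {a b s t : ℝ}
    (hg : ConvexOn ℝ univ g) (hgs : StrictConvexOn ℝ (Ioo a b) g) (ht : t ∈ Ioo a b)
    (hsupp : ∀ y, g t + s * (y - t) ≤ g y) {u : ι → ℝ}
    (hu : Tendsto (fun i => g (u i) - (g t + s * (u i - t))) l (𝓝 0)) :
    Tendsto u l (𝓝 t) := by
  have hconv : ConvexOn ℝ univ (fun y => g y - (g t + s * (y - t))) := by
    refine hg.sub ⟨convex_univ, fun x _ y _ c d _ _ hcd => le_of_eq ?_⟩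
    simp only [smul_eq_mul]
    linear_combination (g t - s * t) * hcd
  refine hconv.tendsto_nhds_of_tendsto_apply ?_ (by simpa using hu)
  filter_upwards [nhdsWithin_le_nhds (Ioo_mem_nhds ht.1 ht.2), self_mem_nhdsWithin]
    with q hq hqt
  simpa using hgs.add_mul_sub_lt (fun y _ => hsupp y) ht hq hqt

end ConvexOn

namespace WeakL1Tendsto

variable {E : Type*} [MeasurableSpace E] {μ : Measure E} {v : ℕ → E → ℝ} {w : E → ℝ}

theorem congr_ae (h : WeakL1Tendsto μ v w) {w' : E → ℝ} (hw : w =ᵐ[μ] w') :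
    WeakL1Tendsto μ v w' := by
  intro φ hφ hφC
  have hφw : (fun x => w x * φ x) =ᵐ[μ] fun x => w' x * φ x := by
    filter_upwards [hw] with x hx
    rw [hx]
  rw [← integral_congr_ae hφw]
  exact h φ hφ hφC

theorem tendsto_integral_sub_mul (h : WeakL1Tendsto μ v w) (hv : ∀ n, Integrable (v n) μ)
    (hw : Integrable w μ) {φ : E → ℝ} (hφ : Measurable φ) {C : ℝ} (hφC : ∀ x, |φ x| ≤ C) :
    Tendsto (fun n => ∫ x, (v n x - w x) * φ x ∂μ) atTop (𝓝 0) := by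
  have hint : ∀ f : E → ℝ, Integrable f μ → Integrable (fun x => f x * φ x) μ := fun f hf =>
    hf.mul_bdd hφ.aestronglyMeasurable (ae_of_all _ hφC)
  simp_rw [sub_mul, integral_sub (hint _ (hv _)) (hint _ hw)]
  simpa using (h φ hφ ⟨C, hφC⟩).sub_const (∫ x, w x * φ x ∂μ)

theorem restrict (h : WeakL1Tendsto μ v w) {A : Set E} (hA : MeasurableSet A) :
    WeakL1Tendsto (μ.restrict A) v w := by
  intro φ hφ ⟨C, hφC⟩
  have hAφ : ∀ f : E → ℝ, ∫ x in A, f x * φ x ∂μ = ∫ x, f x * A.indicator φ x ∂μ := fun f => by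
    rw [← integral_indicator hA]
    congr 1 with x
    by_cases hx : x ∈ A <;> simp [hx]
  simp_rw [hAφ]
  refine h _ (hφ.indicator hA) ⟨C, fun x => ?_⟩
  by_cases hx : x ∈ A
  · simpa [hx] using hφC x
  · simpa [hx] using (abs_nonneg _).trans (hφC x)

theorem tendsto_integral_sub_sub_mul {u : ℕ → E → ℝ} {U : E → ℝ} (hu : WeakL1Tendsto μ u U)
    (hv : WeakL1Tendsto μ v w) (hu_int : ∀ n, Integrable (u n) μ) (hU : Integrable U μ)
    (hv_int : ∀ n, Integrable (v n) μ) (hw : Integrable w μ) {ψ : E → ℝ} (hψ : Measurable ψ)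
    {C : ℝ} (hψC : ∀ x, |ψ x| ≤ C) :
    Tendsto (fun n => ∫ x, u n x - U x - ψ x * (v n x - w x) ∂μ) atTop (𝓝 0) := by
  have h1 := hu.tendsto_integral_sub_mul hu_int hU (measurable_const (a := (1 : ℝ)))
    (C := 1) (by simp)
  have h2 := hv.tendsto_integral_sub_mul hv_int hw hψ hψC
  have hint : ∀ n, Integrable (fun x => ψ x * (v n x - w x)) μ := fun n =>
    ((hv_int n).sub hw).bdd_mul hψ.aestronglyMeasurable (ae_of_all _ hψC)
  have heq : ∀ n, ∫ x, u n x - U x - ψ x * (v n x - w x) ∂μ =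
      ∫ x, (u n x - U x) * 1 ∂μ - ∫ x, (v n x - w x) * ψ x ∂μ := fun n => by
    simp_rw [mul_one, mul_comm _ (ψ _)]
    exact integral_sub ((hu_int n).sub hU) (hint n)
  simpa [heq] using h1.sub h2

end WeakL1Tendsto

theorem exists_seq_tendsto_ae_zero_of_tendsto_integral {E : Type*} [MeasurableSpace E]
    {μ : Measure E} {F : ℕ → E → ℝ} (hint : ∀ n, Integrable (F n) μ) (hnn : ∀ n, 0 ≤ᵐ[μ] F n)
    (hF : Tendsto (fun n => ∫ x, F n x ∂μ) atTop (𝓝 0)) :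
    ∃ ns : ℕ → ℕ, StrictMono ns ∧ ∀ᵐ x ∂μ, Tendsto (fun k => F (ns k) x) atTop (𝓝 0) := by
  have hL1 : Tendsto (fun n => eLpNorm (F n - 0) 1 μ) atTop (𝓝 0) := by
    have heq : ∀ n, eLpNorm (F n - 0) 1 μ = ENNReal.ofReal (∫ x, F n x ∂μ) := fun n => by
      rw [sub_zero, eLpNorm_one_eq_lintegral_enorm,
        ofReal_integral_eq_lintegral_ofReal (hint n) (hnn n)]
      refine lintegral_congr_ae ?_
      filter_upwards [hnn n] with x hx using Real.enorm_eq_ofReal hx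
    simpa only [heq, ENNReal.ofReal_zero] using ENNReal.tendsto_ofReal hF
  exact (tendstoInMeasure_of_tendsto_eLpNorm one_ne_zero (fun n => (hint n).aestronglyMeasurable)
    aestronglyMeasurable_zero hL1).exists_seq_tendsto_ae

theorem WeakL1Tendsto.exists_seq_tendsto_ae_of_strictConvexOn {E : Type*} [MeasurableSpace E]
    {μ : Measure E} {g : ℝ → ℝ} {a b : ℝ} (hg : ConvexOn ℝ univ g)
    (hgs : StrictConvexOn ℝ (Ioo a b) g) {v : ℕ → E → ℝ} {w : E → ℝ}
    (hv : WeakL1Tendsto μ v w) (hgv : WeakL1Tendsto μ (fun n x => g (v n x)) fun x => g (w x))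
    (hw : Measurable w) (hv_int : ∀ n, Integrable (v n) μ) (hw_int : Integrable w μ)
    (hgv_int : ∀ n, Integrable (fun x => g (v n x)) μ)
    (hgw_int : Integrable (fun x => g (w x)) μ) :
    ∃ ns : ℕ → ℕ, StrictMono ns ∧
      ∀ᵐ y ∂μ, w y ∈ Ioo a b → Tendsto (fun k => v (ns k) y) atTop (𝓝 (w y)) := by
  set s : ℝ → ℝ := fun t => derivWithin g (Ioi t) t
  have hsupp : ∀ t y, g t + s t * (y - t) ≤ g y := fun t y =>
    hg.add_rightDeriv_mul_sub_le (by simp) trivial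
  have hs_mono : Monotone s := hg.monotone_rightDeriv
  set A := w ⁻¹' Ioo a b
  have hA : MeasurableSet A := hw measurableSet_Ioo
  set ψ := A.indicator (s ∘ w)
  have hψ : Measurable ψ := (hs_mono.measurable.comp hw).indicator hA
  have hψC : ∀ x, |ψ x| ≤ max |s a| |s b| := fun x => by
    by_cases hx : x ∈ A
    · simpa [ψ, hx] using abs_le_max_abs_abs (hs_mono hx.1.le) (hs_mono hx.2.le)
    · simp [ψ, hx]
  have hψw : ∀ x ∈ A, ψ x = s (w x) := fun x hx => indicator_of_mem hx _
  set F : ℕ → E → ℝ := fun n x => g (v n x) - g (w x) - ψ x * (v n x - w x)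
  have hF : Tendsto (fun n => ∫ x in A, F n x ∂μ) atTop (𝓝 0) :=
    (hgv.restrict hA).tendsto_integral_sub_sub_mul (hv.restrict hA)
      (fun n => (hgv_int n).restrict) hgw_int.restrict (fun n => (hv_int n).restrict)
      hw_int.restrict hψ hψC
  have hF_int : ∀ n, Integrable (F n) (μ.restrict A) := fun n =>
    (((hgv_int n).sub hgw_int).sub (((hv_int n).sub hw_int).bdd_mul
      hψ.aestronglyMeasurable (ae_of_all _ hψC))).restrict
  have hF_nonneg : ∀ n, 0 ≤ᵐ[μ.restrict A] F n := fun n =>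
    ae_restrict_of_forall_mem hA fun x hx => by
      simp only [F, Pi.zero_apply, hψw x hx]
      linarith [hsupp (w x) (v n x)]
  obtain ⟨ns, hns, hae⟩ := exists_seq_tendsto_ae_zero_of_tendsto_integral hF_int hF_nonneg hF
  refine ⟨ns, hns, ?_⟩
  filter_upwards [ae_imp_of_ae_restrict hae] with y hyF hyA
  refine hg.tendsto_nhds_of_tendsto_sub_supportingLine hgs hyA (hsupp (w y)) ?_
  refine (hyF hyA).congr fun k => ?_
  simp only [F, hψw y hyA]
  ring

theorem statement1_general {M : ℕ} (O : Set (EuclideanSpace ℝ (Fin M)))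
    (g : ℝ → ℝ) (a b : ℝ)
    (hg_conv : ConvexOn ℝ Set.univ g)
    (hg_sconv : StrictConvexOn ℝ (Set.Ioo a b) g)
    (v : ℕ → EuclideanSpace ℝ (Fin M) → ℝ) (vlim : EuclideanSpace ℝ (Fin M) → ℝ)
    (hv_int : ∀ n, Integrable (v n) (volume.restrict O))
    (hvlim_int : Integrable vlim (volume.restrict O))
    (hv_weak : WeakL1Tendsto (volume.restrict O) v vlim)
    (hgv_int : ∀ n, Integrable (fun x => g (v n x)) (volume.restrict O))
    (G : EuclideanSpace ℝ (Fin M) → ℝ)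
    (hG_int : Integrable G (volume.restrict O))
    (hgv_weak : WeakL1Tendsto (volume.restrict O) (fun n x => g (v n x)) G)
    (hGg : ∀ᵐ x ∂(volume.restrict O), g (vlim x) = G x) :
    ∃ φ : ℕ → ℕ, StrictMono φ ∧
      ∀ᵐ y ∂(volume.restrict O), vlim y ∈ Set.Ioo a b →
        Tendsto (fun k => v (φ k) y) atTop (nhds (vlim y)) := by
  set w := hvlim_int.1.mk vlim
  have hvw : vlim =ᵐ[volume.restrict O] w := hvlim_int.1.ae_eq_mk
  have hGw : G =ᵐ[volume.restrict O] fun x => g (w x) := by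
    filter_upwards [hvw, hGg] with x hx hGx
    rw [← hGx, hx]
  obtain ⟨ns, hns, hae⟩ := (hv_weak.congr_ae hvw).exists_seq_tendsto_ae_of_strictConvexOn hg_conv
    hg_sconv (hgv_weak.congr_ae hGw) hvlim_int.1.measurable_mk hv_int (hvlim_int.congr hvw)
    hgv_int (hG_int.congr hGw)
  refine ⟨ns, hns, ?_⟩
  filter_upwards [hae, hvw] with y hy hvwy
  simpa only [hvwy] using hy

/-- If `g : ℝ → ℝ` is convex, strictly convex on `(a,b)`,
`v_n ⇀ v` and `g(v_n) ⇀ G` weakly in `L¹(O)`, and `g(v) = G` a.e., then along a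
subsequence `v_n(y) → v(y)` for a.e. `y` in `{y ∈ O : v(y) ∈ (a,b)}`. -/
theorem statement1 {M : ℕ} (O : Set (EuclideanSpace ℝ (Fin M)))
    (hO : IsOpen O) (hObd : Bornology.IsBounded O)
    (g : ℝ → ℝ) (a b : ℝ) (hab : a < b)
    (hg_conv : ConvexOn ℝ Set.univ g)
    (hg_sconv : StrictConvexOn ℝ (Set.Ioo a b) g)
    (v : ℕ → EuclideanSpace ℝ (Fin M) → ℝ) (vlim : EuclideanSpace ℝ (Fin M) → ℝ)
    (hv_int : ∀ n, Integrable (v n) (volume.restrict O))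
    (hvlim_int : Integrable vlim (volume.restrict O))
    (hv_weak : WeakL1Tendsto (volume.restrict O) v vlim)
    (hgv_int : ∀ n, Integrable (fun x => g (v n x)) (volume.restrict O))
    (G : EuclideanSpace ℝ (Fin M) → ℝ)
    (hG_int : Integrable G (volume.restrict O))
    (hgv_weak : WeakL1Tendsto (volume.restrict O) (fun n x => g (v n x)) G)
    (hGg : ∀ᵐ x ∂(volume.restrict O), g (vlim x) = G x) :
    ∃ φ : ℕ → ℕ, StrictMono φ ∧
      ∀ᵐ y ∂(volume.restrict O), vlim y ∈ Set.Ioo a b →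
        Tendsto (fun k => v (φ k) y) atTop (nhds (vlim y)) :=
  statement1_general O g a b hg_conv hg_sconv v vlim hv_int hvlim_int hv_weak hgv_int G hG_int
    hgv_weak hGg
end

section
/- Let ρ^{m-1} be a positive piecewise constant function on a finite tetrahedral mesh of Ω and u a given bounded velocity field. If ρ^m solves the upwind discontinuous Galerkin scheme ∫_Ω (ρ^m - ρ^{m-1})/Δt · φ dx = Σ_Γ ∫_Γ (ρ^m_-(u·ν)^+ + ρ^m_+(u·ν)^-)[φ]_Γ dS for all piecewise constants φ, then min_x ρ^m ≥ (min_x ρ^{m-1}) / (1 + Δt ‖div u‖_{L^∞(Ω)}). In particular, if ρ^{m-1} > 0 everywhere, then ρ^m > 0 everywhere. -/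
/-!
Testing the scheme with the indicator of `{ρ^m ≤ 0}` makes the left-hand side negative as soon
as that set is nonempty, while upwinding makes every face contribution nonnegative; hence
`ρ^m > 0`. Testing with the indicator of a cell `k` where `ρ^m` is minimal, upwinding bounds the
face contributions below by `ρ^m_k` times the outflux of `k`, which the divergence theorem
identifies with `-vol k * div u|_k`; this gives `ρ^{m-1}_k ≤ ρ^m_k (1 + Δt div u|_k)`.
-/

open Finset

lemma upwind_flux_mul_jump_nonpos_indicator_nonneg {x y a b : ℝ} (ha : 0 ≤ a) (hb : b ≤ 0) :
    0 ≤ (x * a + y * b) * ((if y ≤ 0 then 1 else 0) - (if x ≤ 0 then 1 else 0)) := by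
  split_ifs <;> nlinarith

lemma upwind_flux_mul_jump_indicator_ge_of_isMin {ι : Type*} [DecidableEq ι] {ρ : ι → ℝ}
    {i j k : ι} (hmin : ∀ E, ρ k ≤ ρ E) {a b : ℝ} (ha : 0 ≤ a) (hb : b ≤ 0) :
    ρ k * ((if j = k then 1 else 0) - (if i = k then 1 else 0)) * (a + b) ≤
      (ρ i * a + ρ j * b) * ((if j = k then 1 else 0) - (if i = k then 1 else 0)) := by
  have := hmin i
  have := hmin j
  split_ifs <;> subst_vars <;> nlinarith

section UpwindScheme

universe u v

variable {ι : Type u} {F : Type v} [Fintype ι] [Fintype F]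

/-- `ρ₀` is `ρ^{m-1}`; the face `Γ` is oriented from `Em Γ` to `Ep Γ`, and `a Γ`, `b Γ` are the
integrals of `(u·ν)^+`, `(u·ν)^-` over it. -/
def UpwindScheme (vol : ι → ℝ) (Em Ep : F → ι) (a b : F → ℝ) (Δt : ℝ) (ρ ρ₀ : ι → ℝ) : Prop :=
  ∀ φ : ι → ℝ, ∑ E, vol E * ((ρ E - ρ₀ E) / Δt) * φ E =
    ∑ Γ, (ρ (Em Γ) * a Γ + ρ (Ep Γ) * b Γ) * (φ (Ep Γ) - φ (Em Γ))

variable {vol : ι → ℝ} {Em Ep : F → ι} {a b : F → ℝ} {Δt : ℝ} {ρ ρ₀ : ι → ℝ}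

theorem UpwindScheme.pos (h : UpwindScheme vol Em Ep a b Δt ρ ρ₀) (hvol : ∀ E, 0 < vol E)
    (hΔt : 0 < Δt) (ha : ∀ Γ, 0 ≤ a Γ) (hb : ∀ Γ, b Γ ≤ 0) (hρ₀ : ∀ E, 0 < ρ₀ E) (E : ι) :
    0 < ρ E := by
  classical
  by_contra! hE
  have hlhs : ∑ E, vol E * ((ρ E - ρ₀ E) / Δt) * (if ρ E ≤ 0 then 1 else 0) < 0 := by
    simp only [mul_ite, mul_one, mul_zero, ← sum_filter]
    refine sum_neg (fun i hi ↦ ?_) ⟨E, by simpa using hE⟩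
    have hi : ρ i ≤ 0 := (mem_filter.mp hi).2
    exact mul_neg_of_pos_of_neg (hvol i) (div_neg_of_neg_of_pos (by linarith [hρ₀ i]) hΔt)
  have hrhs := sum_nonneg fun Γ (_ : Γ ∈ univ) ↦
    upwind_flux_mul_jump_nonpos_indicator_nonneg (x := ρ (Em Γ)) (y := ρ (Ep Γ)) (ha Γ) (hb Γ)
  linarith [h fun E ↦ if ρ E ≤ 0 then 1 else 0]

theorem UpwindScheme.le_mul_one_add_mul_of_isMin [DecidableEq ι]
    (h : UpwindScheme vol Em Ep a b Δt ρ ρ₀) {k : ι} (hvol : 0 < vol k) (hΔt : 0 < Δt)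
    (ha : ∀ Γ, 0 ≤ a Γ) (hb : ∀ Γ, b Γ ≤ 0) {d : ℝ}
    (hdiv : vol k * d =
      ∑ Γ, ((if Em Γ = k then (1 : ℝ) else 0) - (if Ep Γ = k then 1 else 0)) * (a Γ + b Γ))
    (hmin : ∀ E, ρ k ≤ ρ E) :
    ρ₀ k ≤ ρ k * (1 + Δt * d) := by
  have htest : vol k * ((ρ k - ρ₀ k) / Δt) =
      ∑ Γ, (ρ (Em Γ) * a Γ + ρ (Ep Γ) * b Γ) *
        ((if Ep Γ = k then 1 else 0) - (if Em Γ = k then 1 else 0)) := by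
    simpa [mul_ite] using h fun E ↦ if E = k then 1 else 0
  have houtflux : -(ρ k * (vol k * d)) ≤ vol k * ((ρ k - ρ₀ k) / Δt) := by
    calc -(ρ k * (vol k * d))
        = ∑ Γ, ρ k * ((if Ep Γ = k then 1 else 0) - (if Em Γ = k then 1 else 0)) *
            (a Γ + b Γ) := by
          rw [hdiv, mul_sum, ← sum_neg_distrib]
          exact sum_congr rfl fun Γ _ ↦ by ring
      _ ≤ _ := htest ▸ sum_le_sum fun Γ _ ↦
          upwind_flux_mul_jump_indicator_ge_of_isMin hmin (ha Γ) (hb Γ)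
  rw [mul_div_assoc', le_div_iff₀ hΔt] at houtflux
  nlinarith

end UpwindScheme

/-- positivity preservation for the upwind discontinuous Galerkin
continuity scheme.

The mesh is abstracted as a finite nonempty set `ι` of elements with volumes
`vol E > 0`, and a finite set `F` of interior faces; the face `Γ` is shared by
the elements `Em Γ` and `Ep Γ` (with the fixed normal `ν` pointing from
`Em Γ` to `Ep Γ`).  For a face `Γ`, `a Γ = ∫_Γ (u·ν)^+ dS ≥ 0` and
`b Γ = ∫_Γ (u·ν)^- dS ≤ 0`.  The piecewise constant `div u` is `d : ι → ℝ`,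
related to the face fluxes through the divergence theorem (`hdiv`, using that
`u·ν = 0` on `∂Ω`), and `D = ‖div u‖_{L^∞(Ω)}`.  The scheme (`hscheme`) is the
upwind DG scheme tested with every piecewise constant `φ`.

Conclusion: `min ρ^m ≥ min ρ^{m-1} / (1 + Δt ‖div u‖_∞)`; in particular, if
`ρ^{m-1} > 0` everywhere then `ρ^m > 0` everywhere. -/
theorem statement3 {ι F : Type*} [Fintype ι] [Nonempty ι] [DecidableEq ι] [Fintype F]
    (vol : ι → ℝ) (hvol : ∀ E, 0 < vol E)
    (Em Ep : F → ι)
    (a : F → ℝ) (ha : ∀ Γ, 0 ≤ a Γ)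
    (b : F → ℝ) (hb : ∀ Γ, b Γ ≤ 0)
    (Δt : ℝ) (hΔt : 0 < Δt)
    (d : ι → ℝ) (D : ℝ) (hD : ∀ E, |d E| ≤ D)
    (hdiv : ∀ E : ι, vol E * d E =
      ∑ Γ : F, ((if Em Γ = E then (1 : ℝ) else 0) - (if Ep Γ = E then 1 else 0))
        * (a Γ + b Γ))
    (ρm ρm1 : ι → ℝ)
    (hρm1pos : ∀ E, 0 < ρm1 E)
    (hscheme : ∀ φ : ι → ℝ,
      ∑ E : ι, vol E * ((ρm E - ρm1 E) / Δt) * φ E =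
      ∑ Γ : F, (ρm (Em Γ) * a Γ + ρm (Ep Γ) * b Γ) * (φ (Ep Γ) - φ (Em Γ))) :
    (∀ E : ι,
      (Finset.univ.inf' Finset.univ_nonempty ρm1) / (1 + Δt * D) ≤ ρm E) ∧
    (∀ E : ι, 0 < ρm E) := by
  have hpos := UpwindScheme.pos hscheme hvol hΔt ha hb hρm1pos
  obtain ⟨k, hmin⟩ := Finite.exists_min ρm
  have hk := UpwindScheme.le_mul_one_add_mul_of_isMin hscheme (hvol k) hΔt ha hb (hdiv k) hmin
  have hdD : d k ≤ D := (le_abs_self _).trans (hD k)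
  have hden : 0 < 1 + Δt * D := by nlinarith [abs_nonneg (d k), hD k]
  refine ⟨fun E ↦ ?_, hpos⟩
  rw [div_le_iff₀ hden]
  calc univ.inf' univ_nonempty ρm1 ≤ ρm1 k := inf'_le _ (mem_univ k)
    _ ≤ ρm k * (1 + Δt * d k) := hk
    _ ≤ ρm k * (1 + Δt * D) := by have := hpos k; gcongr
    _ ≤ ρm E * (1 + Δt * D) := by gcongr; exact hmin E
end
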